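/- Let L be the Schrödinger-Virasoro algebra. There exist Lie bialgebra structures (L, [·,·], Δ) on L that are not triangular coboundary; specifically, taking Δ = D with D a nonzero element of the family D(L_n) = γ(M_0⊗M_n − M_n⊗M_0), D(Y_{n−1/2}) = β(M_0⊗Y_{n−1/2} − Y_{n−1/2}⊗M_0), D(M_n) = 2β(M_0⊗M_n − M_n⊗M_0) yields a Lie bialgebra whose cobracket Δ is not of the form Δ_r(x) = x·r for any r ∈ L⊗L. -/

import Mathlib

open TensorProduct

/-- Index set for the basis of the Schrödinger–Virasoro algebra:
`Sum.inl n ↔ L_n`, `Sum.inr (Sum.inl n) ↔ Y_{n+1/2}`, `Sum.inr (Sum.inr n) ↔ M_n`. -/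
abbrev SVIx : Type := ℤ ⊕ ℤ ⊕ ℤ

variable (F : Type) [Field F] [CharZero F]

/-- Underlying space of the Schrödinger–Virasoro algebra: the free `F`-module on `SVIx`. -/
abbrev SVL := SVIx →₀ F

noncomputable def Lb (n : ℤ) : SVL F := Finsupp.single (Sum.inl n) 1
noncomputable def Yb (n : ℤ) : SVL F := Finsupp.single (Sum.inr (Sum.inl n)) 1
noncomputable def Mb (n : ℤ) : SVL F := Finsupp.single (Sum.inr (Sum.inr n)) 1

/-- The bracket of basis vectors.  Here `Yb n` stands for `Y_{n+1/2}`, so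
`[L_m, Y_{n+1/2}] = ((n+1/2) - m/2) Y_{m+n+1/2}` and
`[Y_{a+1/2}, Y_{b+1/2}] = (b-a) M_{a+b+1}`; all other brackets vanish. -/
noncomputable def brIx : SVIx → SVIx → SVL F
  | Sum.inl m, Sum.inl n => ((n - m : ℤ) : F) • Lb F (m + n)
  | Sum.inl m, Sum.inr (Sum.inl n) => (((2*n + 1 - m : ℤ) : F) / 2) • Yb F (m + n)
  | Sum.inl m, Sum.inr (Sum.inr n) => ((n : ℤ) : F) • Mb F (m + n)
  | Sum.inr (Sum.inl n), Sum.inl m => -((((2*n + 1 - m : ℤ) : F) / 2) • Yb F (m + n))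
  | Sum.inr (Sum.inl a), Sum.inr (Sum.inl b) => ((b - a : ℤ) : F) • Mb F (a + b + 1)
  | Sum.inr (Sum.inr n), Sum.inl m => -(((n : ℤ) : F) • Mb F (m + n))
  | _, _ => 0

/-- The bracket of the Schrödinger–Virasoro algebra: the bilinear extension of `brIx`. -/
noncomputable def bk : SVL F →ₗ[F] SVL F →ₗ[F] SVL F :=
  Finsupp.lsum F fun i => LinearMap.toSpanSingleton F (SVL F →ₗ[F] SVL F)
    (Finsupp.lsum F fun j => LinearMap.toSpanSingleton F (SVL F) (brIx F i j))

abbrev VV := SVL F ⊗[F] SVL F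

noncomputable instance : AddCommGroup (VV F) := inferInstance

noncomputable instance : Zero (VV F) :=
  (inferInstance : AddCommMonoid (VV F)).toAddMonoid.toZero

/-- The adjoint diagonal action of `L` on `L ⊗ L`, as a bilinear map:
`x · (a ⊗ b) = [x,a] ⊗ b + a ⊗ [x,b]`. -/
noncomputable def adVb : SVL F →ₗ[F] VV F →ₗ[F] VV F :=
  ((LinearMap.rTensorHom (SVL F) : (SVL F →ₗ[F] SVL F) →ₗ[F] (VV F →ₗ[F] VV F)) ∘ₗ bk F)
    + ((LinearMap.lTensorHom (SVL F) : (SVL F →ₗ[F] SVL F) →ₗ[F] (VV F →ₗ[F] VV F)) ∘ₗ bk F)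

/-- The twist map `τ(x ⊗ y) = y ⊗ x`. -/
noncomputable def tau : VV F →ₗ[F] VV F := (TensorProduct.comm F (SVL F) (SVL F)).toLinearMap

/-- The map `1 - τ`. -/
noncomputable def oneMinusTau : VV F →ₗ[F] VV F where
  toFun v := v - tau F v
  map_add' x y := by
    simp only [map_add]; exact sub_add_sub_comm x (tau F x) y (tau F y) ▸ rfl
  map_smul' c x := by simp only [map_smul, RingHom.id_apply, smul_sub]

/-- `Im (1 - τ) ⊂ L ⊗ L`. -/
noncomputable def skewIm : Submodule F (VV F) := LinearMap.range (oneMinusTau F)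
abbrev T3 := SVL F ⊗[F] (SVL F ⊗[F] SVL F)

/-- The bracket as a linear map on `L ⊗ L`. -/
noncomputable def lb : VV F →ₗ[F] SVL F := TensorProduct.lift (bk F)

/-- The linear map with `(a ⊗ b) ⊗ (a' ⊗ b') ↦ [a,a'] ⊗ b ⊗ b' + a ⊗ [b,a'] ⊗ b' + a ⊗ a' ⊗ [b,b']`,
so that the classical Yang–Baxter expression is `c(r) = cmap (r ⊗ r)`. -/
noncomputable def cmap : (VV F ⊗[F] VV F) →ₗ[F] T3 F :=
  ((TensorProduct.map (lb F) (LinearMap.id : VV F →ₗ[F] VV F)) ∘ₗ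
      (TensorProduct.tensorTensorTensorComm F (SVL F) (SVL F) (SVL F) (SVL F)).toLinearMap)
  + ((LinearMap.lTensor (SVL F)
        ((TensorProduct.map (lb F) (LinearMap.id : SVL F →ₗ[F] SVL F)) ∘ₗ
          (TensorProduct.assoc F (SVL F) (SVL F) (SVL F)).symm.toLinearMap)) ∘ₗ
      (TensorProduct.assoc F (SVL F) (SVL F) (VV F)).toLinearMap)
  + (((TensorProduct.assoc F (SVL F) (SVL F) (SVL F)).toLinearMap) ∘ₗ
      (TensorProduct.map (LinearMap.id : VV F →ₗ[F] VV F) (lb F)) ∘ₗ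
      (TensorProduct.tensorTensorTensorComm F (SVL F) (SVL F) (SVL F) (SVL F)).toLinearMap)

/-- The classical Yang–Baxter expression `c(r)`. -/
noncomputable def cyb (r : VV F) : T3 F := cmap F (r ⊗ₜ[F] r)

/-- The adjoint diagonal action of `x ∈ L` on `L ⊗ L ⊗ L`. -/
noncomputable def adT3 (x : SVL F) : T3 F →ₗ[F] T3 F :=
  LinearMap.rTensor (VV F) (bk F x) + LinearMap.lTensor (SVL F) (adVb F x)

/-- The cyclic map `ξ : x₁ ⊗ x₂ ⊗ x₃ ↦ x₂ ⊗ x₃ ⊗ x₁`. -/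
noncomputable def xi : T3 F →ₗ[F] T3 F :=
  (TensorProduct.assoc F (SVL F) (SVL F) (SVL F)).toLinearMap ∘ₗ
    (TensorProduct.comm F (SVL F) (VV F)).toLinearMap

/-- `1 + ξ + ξ²` applied to an element of `L ⊗ L ⊗ L`. -/
noncomputable def cyclicSum (t : T3 F) : T3 F := t + xi F t + xi F (xi F t)

noncomputable instance : Zero (T3 F) :=
  (inferInstance : AddCommMonoid (T3 F)).toAddMonoid.toZero

/-- Values on basis elements of the special derivations `D` with parameters
`(α, α†, β, β†, γ, γ†)`:  `D(L_n) = (nα+γ) M₀⊗M_n + (nα†+γ†) M_n⊗M₀`,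
`D(Y_{n+1/2}) = β M₀⊗Y_{n+1/2} + β† Y_{n+1/2}⊗M₀`, `D(M_n) = 2(β M₀⊗M_n + β† M_n⊗M₀)`. -/
noncomputable def dval (a a' b b' c c' : F) : SVIx → VV F
  | Sum.inl n => (((n : ℤ) : F) * a + c) • (Mb F 0 ⊗ₜ[F] Mb F n)
      + (((n : ℤ) : F) * a' + c') • (Mb F n ⊗ₜ[F] Mb F 0)
  | Sum.inr (Sum.inl n) => b • (Mb F 0 ⊗ₜ[F] Yb F n) + b' • (Yb F n ⊗ₜ[F] Mb F 0)
  | Sum.inr (Sum.inr n) => (2 * b) • (Mb F 0 ⊗ₜ[F] Mb F n) + (2 * b') • (Mb F n ⊗ₜ[F] Mb F 0)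

/-- The special derivation with parameters `(α, α†, β, β†, γ, γ†)`. -/
noncomputable def Dmap (a a' b b' c c' : F) : SVL F →ₗ[F] VV F :=
  Finsupp.lsum F fun i => LinearMap.toSpanSingleton F (VV F) (dval F a a' b b' c c' i)

/-- `D` is a derivation from `L` to the `L`-module `L ⊗ L`. -/
def IsDer (D : SVL F →ₗ[F] VV F) : Prop :=
  ∀ x y : SVL F, D (bk F x y) = adVb F x (D y) - adVb F y (D x)

/-!
The central element `M₀` gives a factorization `D = M₀ ∧ φ`, i.e. `D x = M₀ ⊗ φ x - φ x ⊗ M₀`,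
where `φ` is the (outer) derivation of `L` with `φ L_n = (nα + γ) M_n`, `φ Y = β Y`,
`φ M_n = 2β M_n`. Hence `D` takes values in `Im (1 - τ)` and is a derivation; since
`φ M₀ ∈ F M₀` we get `D M₀ = 0`, so `(1 ⊗ D) (D x) = u - ξ u` with `u = M₀ ⊗ M₀ ⊗ φ² x`,
whose cyclic sum vanishes because `ξ³ = 1`.

If `D x = x · r`, take `n` so large that no basis tensor occurring in `r` has second factor
`M_n`. Comparing coefficients of `M₀ ⊗ M_n` in `D L_n = L_n · r` and `D M_n = M_n · r` gives
`nα + γ = 0` and `2β = -n r_{M₀,L₀}` for all large `n`, so `α = β = γ = 0`.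
-/

open Filter

section
omit [CharZero F]

lemma bk_single (i j : SVIx) (s t : F) :
    bk F (Finsupp.single i s) (Finsupp.single j t) = (s * t) • brIx F i j := by
  simp [bk, LinearMap.toSpanSingleton_apply, mul_smul, Finsupp.lsum_single]

lemma adVb_tmul (x u v : SVL F) :
    adVb F x (u ⊗ₜ[F] v) = bk F x u ⊗ₜ[F] v + u ⊗ₜ[F] bk F x v := by
  simp [adVb, LinearMap.rTensorHom, LinearMap.lTensorHom]

lemma Dmap_single (a a' b b' c c' : F) (i : SVIx) (t : F) :
    Dmap F a a' b b' c c' (Finsupp.single i t) = t • dval F a a' b b' c c' i := by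
  simp [Dmap, LinearMap.toSpanSingleton_apply, Finsupp.lsum_single]

lemma bk_Mb_zero (x : SVL F) : bk F x (Mb F 0) = 0 := by
  induction x using Finsupp.induction_linear with
  | zero => simp
  | add x y hx hy => simp [hx, hy]
  | single i s => rcases i with m | m | m <;> simp [Mb, bk_single, brIx]

def IsDerivation (φ : SVL F →ₗ[F] SVL F) : Prop :=
  ∀ x y : SVL F, φ (bk F x y) = bk F x (φ y) - bk F y (φ x)

noncomputable def phiVal (a b c : F) : SVIx → SVL F
  | Sum.inl n => ((n : F) * a + c) • Mb F n
  | Sum.inr (Sum.inl n) => b • Yb F n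
  | Sum.inr (Sum.inr n) => (2 * b) • Mb F n

noncomputable def phi (a b c : F) : SVL F →ₗ[F] SVL F :=
  Finsupp.lsum F fun i => LinearMap.toSpanSingleton F (SVL F) (phiVal F a b c i)

lemma phi_single (a b c : F) (i : SVIx) (t : F) :
    phi F a b c (Finsupp.single i t) = t • phiVal F a b c i := by
  simp [phi, LinearMap.toSpanSingleton_apply, Finsupp.lsum_single]

lemma isDerivation_phi (a b c : F) : IsDerivation F (phi F a b c) := by
  intro x y
  induction x using Finsupp.induction_linear with
  | zero => simp
  | add x x' hx hx' => simp only [map_add, LinearMap.add_apply, hx, hx']; abel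
  | single i s =>
    induction y using Finsupp.induction_linear with
    | zero => simp
    | add y y' hy hy' => simp only [map_add, LinearMap.add_apply, hy, hy']; abel
    | single j t =>
      rcases i with m | m | m <;> rcases j with n | n | n <;>
        simp only [bk_single, phi_single, brIx, phiVal, Lb, Yb, Mb, map_smul, smul_smul,
          map_neg, smul_neg, map_zero, smul_zero, one_mul, mul_one, sub_zero] <;>
        -- `ring_nf` also identifies the basis indices `m + n` and `n + m`
        ring_nf <;> module

noncomputable def wedge (z : SVL F) : SVL F →ₗ[F] VV F :=
  oneMinusTau F ∘ₗ TensorProduct.mk F (SVL F) (SVL F) z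

lemma wedge_apply (z x : SVL F) : wedge F z x = z ⊗ₜ[F] x - x ⊗ₜ[F] z := rfl

lemma wedge_self (z : SVL F) : wedge F z z = 0 := by
  rw [wedge_apply, sub_self]

lemma wedge_mem_skewIm (z x : SVL F) : wedge F z x ∈ skewIm F := LinearMap.mem_range_self _ _

lemma adVb_wedge_of_central {z : SVL F} (hz : ∀ x, bk F x z = 0) (x w : SVL F) :
    adVb F x (wedge F z w) = wedge F z (bk F x w) := by
  simp only [wedge_apply, map_sub, adVb_tmul, hz, zero_tmul, tmul_zero, zero_add, add_zero]

lemma isDer_wedge_comp {z : SVL F} (hz : ∀ x, bk F x z = 0) {φ : SVL F →ₗ[F] SVL F}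
    (hφ : IsDerivation F φ) : IsDer F (wedge F z ∘ₗ φ) := by
  intro x y
  simp only [LinearMap.comp_apply, hφ x y, map_sub, adVb_wedge_of_central F hz]

lemma xi_xi_xi (t : T3 F) : xi F (xi F (xi F t)) = t := by
  induction t using TensorProduct.induction_on with
  | zero => simp
  | add s t hs ht => simp only [map_add, hs, ht]
  | tmul x yz =>
    induction yz using TensorProduct.induction_on with
    | zero => simp
    | add s t hs ht => simp only [map_add, tmul_add, hs, ht]
    | tmul y z => simp [xi]

lemma cyclicSum_sub_xi (t : T3 F) : cyclicSum F (t - xi F t) = 0 := by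
  simp only [cyclicSum, map_sub, xi_xi_xi]
  abel

lemma cyclicSum_lTensor_wedge_comp (z : SVL F) (φ : SVL F →ₗ[F] SVL F)
    (hz : wedge F z (φ z) = 0) (x : SVL F) :
    cyclicSum F (LinearMap.lTensor (SVL F) (wedge F z ∘ₗ φ) (wedge F z (φ x))) = 0 := by
  have hsplit : LinearMap.lTensor (SVL F) (wedge F z ∘ₗ φ) (wedge F z (φ x))
      = z ⊗ₜ[F] (z ⊗ₜ[F] φ (φ x)) - xi F (z ⊗ₜ[F] (z ⊗ₜ[F] φ (φ x))) := by
    simp [wedge_apply, hz, xi, tmul_sub]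
  rw [hsplit, cyclicSum_sub_xi]

lemma Dmap_eq_wedge_comp_phi (a b c : F) :
    Dmap F a (-a) b (-b) c (-c) = wedge F (Mb F 0) ∘ₗ phi F a b c := by
  refine Finsupp.lhom_ext fun i t => ?_
  rcases i with n | n | n <;>
    simp only [LinearMap.comp_apply, Dmap_single, phi_single, dval, phiVal, wedge_apply,
      ← smul_tmul', tmul_smul] <;>
    module

lemma phi_Mb (a b c : F) (n : ℤ) : phi F a b c (Mb F n) = (2 * b) • Mb F n := by
  rw [Mb, phi_single, one_smul]
  rfl

lemma wedge_Mb_zero_phi (a b c : F) : wedge F (Mb F 0) (phi F a b c (Mb F 0)) = 0 := by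
  rw [phi_Mb, map_smul, wedge_self, smul_zero]

noncomputable def tensorCoeff {ι : Type} (p q : ι) : (ι →₀ F) ⊗[F] (ι →₀ F) →ₗ[F] F :=
  Finsupp.lapply (p, q) ∘ₗ (finsuppTensorFinsupp' F ι ι).toLinearMap

lemma tensorCoeff_single_tmul_single {ι : Type} [DecidableEq ι] (p q i j : ι) (s t : F) :
    tensorCoeff F p q (Finsupp.single i s ⊗ₜ[F] Finsupp.single j t)
      = if (i, j) = (p, q) then s * t else 0 := by
  simp only [tensorCoeff, LinearMap.comp_apply, LinearEquiv.coe_toLinearMap,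
    finsuppTensorFinsupp'_single_tmul_single, Finsupp.lapply_apply, Finsupp.single_apply]

lemma eventually_tensorCoeff_eq_zero {ι : Type} (r : (ι →₀ F) ⊗[F] (ι →₀ F)) :
    ∀ᶠ q in cofinite, ∀ p, tensorCoeff F p q r = 0 := by
  classical
  have hfin : ((finsuppTensorFinsupp' F ι ι r).support.image Prod.snd : Set ι).Finite :=
    Finset.finite_toSet _
  filter_upwards [hfin.eventually_cofinite_notMem] with q hq p
  by_contra hne
  exact hq (Finset.mem_image.mpr ⟨(p, q), Finsupp.mem_support_iff.mpr hne, rfl⟩)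

lemma eventually_tensorCoeff_Mb_eq_zero (r : VV F) :
    ∀ᶠ n : ℤ in atTop, ∀ p, tensorCoeff F p (Sum.inr (Sum.inr n)) r = 0 := by
  have hinj : Function.Injective fun n : ℤ => (Sum.inr (Sum.inr n) : SVIx) := by
    intro m n h
    simpa using h
  exact ((hinj.tendsto_cofinite.eventually (eventually_tensorCoeff_eq_zero F r)).filter_mono
    (Int.cofinite_eq ▸ le_sup_right))

lemma tensorCoeff_comp_adVb_Lb (n : ℤ) :
    tensorCoeff F (Sum.inr (Sum.inr 0)) (Sum.inr (Sum.inr n)) ∘ₗ adVb F (Lb F n)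
      = ((-n : ℤ) : F) • tensorCoeff F (Sum.inr (Sum.inr (-n))) (Sum.inr (Sum.inr n)) := by
  ext i j
  simp only [TensorProduct.AlgebraTensorModule.curry_apply, TensorProduct.curry_apply,
    LinearMap.coe_restrictScalars, LinearMap.comp_apply, Finsupp.lsingle_apply,
    LinearMap.smul_apply, smul_eq_mul]
  rcases i with m | m | m <;> rcases j with k | k | k <;>
    simp only [Mb, Yb, Lb, adVb_tmul, bk_single, brIx, one_mul, mul_one, map_add, map_smul,
      ← smul_tmul', tmul_smul, tensorCoeff_single_tmul_single, smul_eq_mul, Prod.mk.injEq,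
      Sum.inr.injEq] <;>
    split_ifs <;> push_cast <;> simp_all; omega

lemma tensorCoeff_comp_adVb_Mb (n : ℤ) :
    tensorCoeff F (Sum.inr (Sum.inr 0)) (Sum.inr (Sum.inr n)) ∘ₗ adVb F (Mb F n)
      = ((-n : ℤ) : F) • (tensorCoeff F (Sum.inl (-n)) (Sum.inr (Sum.inr n))
          + tensorCoeff F (Sum.inr (Sum.inr 0)) (Sum.inl 0)) := by
  ext i j
  simp only [TensorProduct.AlgebraTensorModule.curry_apply, TensorProduct.curry_apply,
    LinearMap.coe_restrictScalars, LinearMap.comp_apply, Finsupp.lsingle_apply,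
    LinearMap.smul_apply, LinearMap.add_apply, smul_eq_mul]
  rcases i with m | m | m <;> rcases j with k | k | k <;>
    simp only [Mb, adVb_tmul, bk_single, brIx, one_mul, mul_one, map_add, map_smul, map_neg,
      map_zero, smul_zero, ← smul_tmul', tmul_smul, tmul_neg, neg_tmul, zero_tmul, tmul_zero,
      tensorCoeff_single_tmul_single, smul_eq_mul, Prod.mk.injEq, Sum.inl.injEq,
      Sum.inr.injEq, add_zero, zero_add] <;>
    split_ifs <;> push_cast <;> simp_all; omega

lemma tensorCoeff_Dmap_Lb (a a' b b' c c' : F) {n : ℤ} (hn : n ≠ 0) :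
    tensorCoeff F (Sum.inr (Sum.inr 0)) (Sum.inr (Sum.inr n))
      (Dmap F a a' b b' c c' (Lb F n)) = n * a + c := by
  rw [Lb, Dmap_single, one_smul]
  simp [dval, Mb, tensorCoeff_single_tmul_single, hn, Prod.ext_iff]

lemma tensorCoeff_Dmap_Mb (a a' b b' c c' : F) {n : ℤ} (hn : n ≠ 0) :
    tensorCoeff F (Sum.inr (Sum.inr 0)) (Sum.inr (Sum.inr n))
      (Dmap F a a' b b' c c' (Mb F n)) = 2 * b := by
  rw [Mb, Dmap_single, one_smul]
  simp [dval, Mb, tensorCoeff_single_tmul_single, hn, Prod.ext_iff]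

lemma eq_zero_of_eventually_intCast_mul_add_eq_zero {u v : F}
    (h : ∀ᶠ n : ℤ in atTop, (n : F) * u + v = 0) : u = 0 ∧ v = 0 := by
  obtain ⟨N, hN⟩ := eventually_atTop.mp h
  have e₀ := hN N le_rfl
  have e₁ := hN (N + 1) (Int.le_add_one le_rfl)
  push_cast at e₁
  constructor
  · linear_combination e₁ - e₀
  · linear_combination (N + 1 : F) * e₀ - N * e₁

end

lemma eq_zero_of_Dmap_eq_adVb {a a' b b' c c' : F} {r : VV F}
    (hr : ∀ x, Dmap F a a' b b' c c' x = adVb F x r) : a = 0 ∧ b = 0 ∧ c = 0 := by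
  have hL : ∀ᶠ n : ℤ in atTop, (n : F) * a + c = 0 := by
    filter_upwards [eventually_tensorCoeff_Mb_eq_zero F r, eventually_ne_atTop 0] with n hr0 hn
    rw [← tensorCoeff_Dmap_Lb F a a' b b' c c' hn, hr, ← LinearMap.comp_apply,
      tensorCoeff_comp_adVb_Lb, LinearMap.smul_apply, hr0, smul_zero]
  have hM : ∀ᶠ n : ℤ in atTop,
      (n : F) * tensorCoeff F (Sum.inr (Sum.inr 0)) (Sum.inl 0) r + 2 * b = 0 := by
    filter_upwards [eventually_tensorCoeff_Mb_eq_zero F r, eventually_ne_atTop 0] with n hr0 hn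
    have hcoeff := tensorCoeff_Dmap_Mb F a a' b b' c c' hn
    rw [hr, ← LinearMap.comp_apply, tensorCoeff_comp_adVb_Mb, LinearMap.smul_apply,
      LinearMap.add_apply, hr0, zero_add, smul_eq_mul] at hcoeff
    push_cast at hcoeff
    linear_combination -hcoeff
  obtain ⟨ha, hc⟩ := eq_zero_of_eventually_intCast_mul_add_eq_zero F hL
  obtain ⟨-, hb⟩ := eq_zero_of_eventually_intCast_mul_add_eq_zero F hM
  exact ⟨ha, (mul_eq_zero.mp hb).resolve_left two_ne_zero, hc⟩

/-- There exist Lie bialgebra structures on the Schrödinger–Virasoro algebra which are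
not (triangular) coboundary: for `(β, γ) ≠ (0,0)`, the derivation
`D = Dmap 0 0 β (-β) γ (-γ)` is the cobracket of a Lie bialgebra but is not of the
form `Δ_r(x) = x · r` for any `r ∈ L ⊗ L`. -/
theorem sv_exists_noncoboundary_lieBialgebra :
    ∀ b c : F, ¬(b = 0 ∧ c = 0) →
      ((∀ x : SVL F, Dmap F 0 0 b (-b) c (-c) x ∈ skewIm F) ∧
       (∀ x : SVL F, cyclicSum F (LinearMap.lTensor (SVL F) (Dmap F 0 0 b (-b) c (-c))
          (Dmap F 0 0 b (-b) c (-c) x)) = 0) ∧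
       IsDer F (Dmap F 0 0 b (-b) c (-c))) ∧
      ¬∃ r : VV F, ∀ x : SVL F, Dmap F 0 0 b (-b) c (-c) x = adVb F x r := by
  intro b c hbc
  have hD : Dmap F 0 0 b (-b) c (-c) = wedge F (Mb F 0) ∘ₗ phi F 0 b c := by
    rw [← Dmap_eq_wedge_comp_phi, neg_zero]
  refine ⟨⟨fun x => ?_, fun x => ?_, ?_⟩, fun ⟨r, hr⟩ => hbc ?_⟩
  · rw [hD, LinearMap.comp_apply]
    exact wedge_mem_skewIm F _ _
  · rw [hD, LinearMap.comp_apply]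
    exact cyclicSum_lTensor_wedge_comp F _ _ (wedge_Mb_zero_phi F 0 b c) x
  · rw [hD]
    exact isDer_wedge_comp F (bk_Mb_zero F) (isDerivation_phi F 0 b c)
  · obtain ⟨-, hb, hc⟩ := eq_zero_of_Dmap_eq_adVb F hr
    exact ⟨hb, hc⟩
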